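/- arXiv:1907.03347 — 9 statements merged into one kernel-verified Lean document; each statement's English description precedes it below -/
import Mathlib

section
/- The only solutions to 2^x + 1 = 2^a + 3^b with x, a, b positive integers and x > a are (x,a,b) = (2,1,1) and (4,3,2), giving the values 5 and 17. -/
set_option maxHeartbeats 1000000

lemma pow_mod_cycle {p d n : ℕ} (h : p ^ d % n = 1 % n) (b : ℕ) :
    p ^ b % n = p ^ (b % d) % n := by
  conv_lhs => rw [← Nat.div_add_mod b d]
  rw [pow_add, pow_mul, Nat.mul_mod, Nat.pow_mod, h, ← Nat.pow_mod, one_pow,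
    ← Nat.mul_mod, one_mul]

theorem case_y_zero (x a b : ℕ) (hx : 0 < x) (ha : 0 < a) (hb : 0 < b) (hxa : x > a) :
    2 ^ x + 1 = 2 ^ a + 3 ^ b ↔ (x, a, b) = (2, 1, 1) ∨ (x, a, b) = (4, 3, 2) := by
  constructor
  · intro h
    -- periodicity facts
    have hb8 : 3 ^ b % 8 = 3 ^ (b % 2) % 8 := pow_mod_cycle (by norm_num) b
    by_cases ha1 : a = 1
    · subst ha1
      by_cases hx2 : x = 2
      · subst hx2
        have h3 : 3 ^ b = 3 ^ 1 := by norm_num at h ⊢; omega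
        have : b = 1 := Nat.pow_right_injective (by norm_num) h3
        left; simp [this]
      · exfalso
        have hx3 : 3 ≤ x := by omega
        have h8x : 2 ^ x % 8 = 0 := by
          have : (8:ℕ) ∣ 2 ^ x := by
            calc (8:ℕ) = 2 ^ 3 := by norm_num
            _ ∣ 2 ^ x := pow_dvd_pow 2 hx3
          omega
        have e : b % 2 = 0 ∨ b % 2 = 1 := by omega
        rcases e with e | e <;> rw [e] at hb8 <;> norm_num at hb8 <;> omega
    · by_cases ha2 : a = 2
      · exfalso
        subst ha2
        have hx3 : 3 ≤ x := by omega
        have h8x : 2 ^ x % 8 = 0 := by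
          have : (8:ℕ) ∣ 2 ^ x := by
            calc (8:ℕ) = 2 ^ 3 := by norm_num
            _ ∣ 2 ^ x := pow_dvd_pow 2 hx3
          omega
        have e : b % 2 = 0 ∨ b % 2 = 1 := by omega
        rcases e with e | e <;> rw [e] at hb8 <;> norm_num at hb8 <;> omega
      -- now a ≥ 3, x ≥ 4
      have ha3 : 3 ≤ a := by omega
      have hx4 : 4 ≤ x := by omega
      have h8x : 2 ^ x % 8 = 0 := by
        have : (8:ℕ) ∣ 2 ^ x := by
          calc (8:ℕ) = 2 ^ 3 := by norm_num
          _ ∣ 2 ^ x := pow_dvd_pow 2 (by omega)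
        omega
      have h8a : 2 ^ a % 8 = 0 := by
        have : (8:ℕ) ∣ 2 ^ a := by
          calc (8:ℕ) = 2 ^ 3 := by norm_num
          _ ∣ 2 ^ a := pow_dvd_pow 2 ha3
        omega
      -- b even
      have hbe : b % 2 = 0 := by
        have e : b % 2 = 0 ∨ b % 2 = 1 := by omega
        rcases e with e | e
        · exact e
        · exfalso; rw [e] at hb8; norm_num at hb8; omega
      -- mod 3 : x even, a odd
      have h3x : 2 ^ x % 3 = 2 ^ (x % 2) % 3 := pow_mod_cycle (by norm_num) x
      have h3a : 2 ^ a % 3 = 2 ^ (a % 2) % 3 := pow_mod_cycle (by norm_num) a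
      have h3b : 3 ^ b % 3 = 0 := by
        have : (3:ℕ) ∣ 3 ^ b := dvd_pow_self 3 (by omega)
        omega
      have hpar : x % 2 = 0 ∧ a % 2 = 1 := by
        have ex : x % 2 = 0 ∨ x % 2 = 1 := by omega
        have ea : a % 2 = 0 ∨ a % 2 = 1 := by omega
        rcases ex with ex | ex <;> rcases ea with ea | ea <;>
          rw [ex] at h3x <;> rw [ea] at h3a <;> norm_num at h3x h3a <;> omega
      -- mod 5 : x % 4 = 0, a % 4 = 3, b % 4 = 2
      have h5x : 2 ^ x % 5 = 2 ^ (x % 4) % 5 := pow_mod_cycle (by norm_num) x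
      have h5a : 2 ^ a % 5 = 2 ^ (a % 4) % 5 := pow_mod_cycle (by norm_num) a
      have h5b : 3 ^ b % 5 = 3 ^ (b % 4) % 5 := pow_mod_cycle (by norm_num) b
      have key : x % 4 = 0 ∧ a % 4 = 3 ∧ b % 4 = 2 := by
        have ex : x % 4 = 0 ∨ x % 4 = 2 := by omega
        have ea : a % 4 = 1 ∨ a % 4 = 3 := by omega
        have eb : b % 4 = 0 ∨ b % 4 = 2 := by omega
        rcases ex with ex | ex <;> rcases ea with ea | ea <;> rcases eb with eb | eb <;>
          rw [ex] at h5x <;> rw [ea] at h5a <;> rw [eb] at h5b <;>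
          norm_num at h5x h5a h5b <;> omega
      -- a = 3 via mod 16
      have h16x : 2 ^ x % 16 = 0 := by
        have : (16:ℕ) ∣ 2 ^ x := by
          calc (16:ℕ) = 2 ^ 4 := by norm_num
          _ ∣ 2 ^ x := pow_dvd_pow 2 hx4
        omega
      have h16b : 3 ^ b % 16 = 9 := by
        have := pow_mod_cycle (show (3:ℕ) ^ 4 % 16 = 1 % 16 by norm_num) b
        rw [key.2.2] at this; norm_num at this; exact this
      have ha3' : a = 3 := by
        by_contra hne
        have ha4 : 4 ≤ a := by omega
        have h16a : 2 ^ a % 16 = 0 := by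
          have : (16:ℕ) ∣ 2 ^ a := by
            calc (16:ℕ) = 2 ^ 4 := by norm_num
            _ ∣ 2 ^ a := pow_dvd_pow 2 ha4
          omega
        omega
      subst ha3'
      by_cases hxe : x = 4
      · subst hxe
        have h3 : 3 ^ b = 3 ^ 2 := by norm_num at h ⊢; omega
        have : b = 2 := Nat.pow_right_injective (by norm_num) h3
        right; simp [this]
      · exfalso
        have hx8 : 8 ≤ x := by omega
        have h64x : 2 ^ x % 64 = 0 := by
          have : (64:ℕ) ∣ 2 ^ x := by
            calc (64:ℕ) = 2 ^ 6 := by norm_num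
            _ ∣ 2 ^ x := pow_dvd_pow 2 (by omega)
          omega
        have h64b : 3 ^ b % 64 = 3 ^ (b % 16) % 64 := pow_mod_cycle (by norm_num) b
        have h17b : 3 ^ b % 17 = 3 ^ (b % 16) % 17 := pow_mod_cycle (by norm_num) b
        have h17x : 2 ^ x % 17 = 2 ^ (x % 8) % 17 := pow_mod_cycle (by norm_num) x
        have eb : b % 16 = 2 ∨ b % 16 = 6 ∨ b % 16 = 10 ∨ b % 16 = 14 := by omega
        rcases eb with eb | eb | eb | eb <;>
            rw [eb] at h64b h17b <;> norm_num at h64b h17b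
        · omega
        · omega
        · omega
        · have ex : x % 8 = 0 ∨ x % 8 = 4 := by omega
          rcases ex with ex | ex <;> rw [ex] at h17x <;> norm_num at h17x <;> omega
  · rintro (h | h) <;> simp only [Prod.mk.injEq] at h <;>
      obtain ⟨rfl, rfl, rfl⟩ := h <;> norm_num
end

section
/- The only solution in positive integers x, b to the equation 2^x − 3^b = 1 is x = 2, b = 1. -/
lemma three_pow_ne_seven (b : ℕ) : (3 : ZMod 8) ^ b ≠ 7 := by
  have h : (3 : ZMod 8) ^ b = 3 ^ (b % 2) := by
    conv_lhs => rw [← Nat.div_add_mod b 2, pow_add, pow_mul]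
    rw [show ((3:ZMod 8)^2) = 1 from by decide, one_pow, one_mul]
  rw [h]
  have : b % 2 < 2 := Nat.mod_lt _ (by norm_num)
  interval_cases (b % 2) <;> decide

theorem eq_one_case (x b : ℕ) (hx : 0 < x) (hb : 0 < b) :
    (2 : ℤ) ^ x - 3 ^ b = 1 ↔ x = 2 ∧ b = 1 := by
  constructor
  · intro h
    have hx3 : x < 3 := by
      by_contra hx3
      push_neg at hx3
      have h8 : (8 : ℤ) ∣ 2 ^ x := by
        calc (8:ℤ) = 2 ^ 3 := by norm_num
        _ ∣ 2 ^ x := pow_dvd_pow 2 hx3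
      have h3 : ((3 : ZMod 8)) ^ b = 7 := by
        have h0 : ((2:ℤ)^x : ZMod 8) = 0 := by
          exact_mod_cast (ZMod.intCast_zmod_eq_zero_iff_dvd _ 8).mpr h8
        have := congrArg (Int.cast : ℤ → ZMod 8) h
        push_cast at this
        rw [show ((2:ZMod 8))^x = ((2:ℤ)^x : ZMod 8) by push_cast; ring, h0] at this
        have h1 : (3:ZMod 8)^b = -1 := by linear_combination -this
        rw [h1]; decide
      exact three_pow_ne_seven b h3
    interval_cases x
    · exfalso
      have h1 : (3:ℤ)^b = 1 := by linarith
      have hb1 : (3:ℤ)^1 ≤ 3^b := pow_le_pow_right₀ (by norm_num) hb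
      norm_num at hb1; linarith
    · have h3 : (3:ℤ)^b = 3 := by linarith
      have hbb : b = 1 := by
        by_contra hb2
        have h2 : 2 ≤ b := by omega
        have := pow_le_pow_right₀ (show (1:ℤ) ≤ 3 by norm_num) h2
        norm_num at this; linarith
      exact ⟨rfl, hbb⟩
  · rintro ⟨rfl, rfl⟩
    norm_num
end

section
/- The only solutions in positive integers to 2^x − 3^b = −1 are (x,b) = (1,1) and (3,2). -/
theorem eq_neg_one_case (x b : ℕ) (hx : 0 < x) (hb : 0 < b) :
    (2 : ℤ) ^ x - 3 ^ b = -1 ↔ (x, b) = (1, 1) ∨ (x, b) = (3, 2) := by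
  constructor
  · intro h
    have hnat : 2 ^ x + 1 = 3 ^ b := by
      have : ((2 ^ x + 1 : ℕ) : ℤ) = ((3 ^ b : ℕ) : ℤ) := by push_cast; linarith
      exact_mod_cast this
    rcases lt_or_ge x 3 with hx3 | hx3
    · interval_cases x
      · -- x = 1 : 3 = 3^b
        have hb1 : b = 1 := by
          have : (3:ℕ) ^ b = 3 ^ 1 := by omega
          exact Nat.pow_right_injective (by norm_num) this
        left; simp [hb1]
      · -- x = 2 : 5 = 3^b, impossible
        exfalso
        have h3 : (3:ℕ) ∣ 3 ^ b := dvd_pow_self 3 hb.ne'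
        omega
    · -- x ≥ 3 : 8 ∣ 2^x
      have h8 : (8:ℕ) ∣ 2 ^ x := by
        have : (2:ℕ) ^ 3 ∣ 2 ^ x := pow_dvd_pow 2 hx3
        simpa using this
      rcases Nat.even_or_odd b with ⟨c, hc⟩ | ⟨c, hc⟩
      · -- b = 2c even
        have hc1 : 0 < c := by omega
        have h3c : (1:ℕ) ≤ 3 ^ c := Nat.one_le_pow _ _ (by norm_num)
        have hfac : (3 ^ c - 1) * (3 ^ c + 1) = 2 ^ x := by
          have hb2 : (3:ℕ) ^ b = 3 ^ c * 3 ^ c := by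
            rw [hc, ← pow_add]
          obtain ⟨s, hs⟩ := Nat.exists_eq_add_of_le h3c
          rw [hs] at hb2 ⊢
          simp only [Nat.add_sub_cancel_left] at *
          nlinarith [hnat, hb2]
        have hd1 : (3 ^ c - 1) ∣ 2 ^ x := ⟨_, hfac.symm⟩
        have hd2 : (3 ^ c + 1) ∣ 2 ^ x := Dvd.intro_left _ hfac
        obtain ⟨i, hi, hie⟩ := (Nat.dvd_prime_pow Nat.prime_two).mp hd1
        obtain ⟨j, hj, hje⟩ := (Nat.dvd_prime_pow Nat.prime_two).mp hd2
        have hie' : 3 ^ c = 2 ^ i + 1 := by omega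
        have h3c3 : (3:ℕ) ^ 1 ≤ 3 ^ c := Nat.pow_le_pow_right (by norm_num) hc1
        -- so 2^i ≥ 2, i.e. i ≥ 1; 2^j = 3^c + 1 ≥ 4 so j ≥ 2
        have hi1 : 1 ≤ i := by
          rcases Nat.eq_zero_or_pos i with rfl | h1
          · norm_num at hie'; omega
          · exact h1
        have hj2 : 2 ≤ j := by
          rcases Nat.lt_or_ge j 2 with h1 | h1
          · interval_cases j <;> norm_num at hje <;> omega
          · exact h1
        have h4j : (4:ℕ) ∣ 2 ^ j := by
          have : (2:ℕ) ^ 2 ∣ 2 ^ j := pow_dvd_pow 2 hj2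
          simpa using this
        have hi1' : i = 1 := by
          by_contra hcon
          have hi2 : 2 ≤ i := by omega
          have h4i : (4:ℕ) ∣ 2 ^ i := by
            have : (2:ℕ) ^ 2 ∣ 2 ^ i := pow_dvd_pow 2 hi2
            simpa using this
          omega
        have hc1' : c = 1 := by
          have : (3:ℕ) ^ c = 3 ^ 1 := by rw [hie', hi1']; norm_num
          exact Nat.pow_right_injective (by norm_num) this
        have hb2 : b = 2 := by omega
        have hx3' : x = 3 := by
          have : (2:ℕ) ^ x = 2 ^ 3 := by
            rw [hb2] at hnat; omega
          exact Nat.pow_right_injective (by norm_num) this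
        right; simp [hb2, hx3']
      · -- b = 2c+1 odd : 3^b ≡ 3 mod 8, but 3^b = 2^x + 1 ≡ 1 mod 8
        exfalso
        have hb3 : (3:ℕ) ^ b = 3 * 9 ^ c := by
          rw [hc, pow_add, pow_mul]; ring
        have h9 : (9:ℕ) ^ c % 8 = 1 := by
          rw [Nat.pow_mod]; norm_num
        omega
  · rintro (h | h) <;>
    · simp only [Prod.mk.injEq] at h
      obtain ⟨h1, h2⟩ := h
      subst h1; subst h2; norm_num
end

section
/- The only solutions in positive integers to 2^x − 3^b = 5 are (x,b) = (3,1) and (5,3). -/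
private lemma pow_mod_cycle_s8 {n : ℕ} (a : ZMod n) {T : ℕ} (hT : a ^ T = 1) (x : ℕ) :
    a ^ x = a ^ (x % T) := by
  conv_lhs => rw [← Nat.div_add_mod x T]
  rw [pow_add, pow_mul, hT, one_pow, one_mul]

theorem eq_five_case (x b : ℕ) (hx : 0 < x) (hb : 0 < b) :
    (2 : ℤ) ^ x - 3 ^ b = 5 ↔ (x, b) = (3, 1) ∨ (x, b) = (5, 3) := by
  constructor
  · intro h
    have hN : 2 ^ x = 3 ^ b + 5 := by
      have : ((2 ^ x : ℕ) : ℤ) = ((3 ^ b + 5 : ℕ) : ℤ) := by push_cast; linarith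
      exact_mod_cast this
    by_cases hb4 : 4 ≤ b
    · exfalso
      have h3b : 3 ^ 4 ≤ 3 ^ b := Nat.pow_le_pow_right (by norm_num) hb4
      have hx6 : 6 ≤ x := by
        by_contra hc
        push_neg at hc
        have : 2 ^ x ≤ 2 ^ 5 := Nat.pow_le_pow_right (by norm_num) (by omega)
        norm_num at this h3b
        omega
      -- mod 64 : 3^b ≡ -5, so b % 16 = 11
      have h64 : (2 : ZMod 64) ^ x - 3 ^ b = 5 := by
        have := congrArg (Nat.cast : ℕ → ZMod 64) hN
        push_cast at this
        linear_combination this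
      have h2x64 : (2 : ZMod 64) ^ x = 0 := by
        obtain ⟨k, rfl⟩ := Nat.exists_eq_add_of_le hx6
        rw [pow_add, show (2 : ZMod 64) ^ 6 = 0 from by decide, zero_mul]
      rw [h2x64, zero_sub, neg_eq_iff_eq_neg] at h64
      have hb16 : b % 16 = 11 := by
        have hcyc : (3 : ZMod 64) ^ (b % 16) = -5 := by
          rw [← pow_mod_cycle_s8 (3 : ZMod 64) (by decide : (3 : ZMod 64) ^ 16 = 1) b]
          exact h64
        have hlt : b % 16 < 16 := Nat.mod_lt _ (by norm_num)
        have key : ∀ r : Fin 16, (3 : ZMod 64) ^ (r : ℕ) = -5 → (r : ℕ) = 11 := by decide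
        exact key ⟨_, hlt⟩ hcyc
      -- mod 17 : 2^x ≡ 12, impossible
      have h17 : (2 : ZMod 17) ^ x - 3 ^ b = 5 := by
        have := congrArg (Nat.cast : ℕ → ZMod 17) hN
        push_cast at this
        linear_combination this
      have h3b17 : (3 : ZMod 17) ^ b = 7 := by
        rw [pow_mod_cycle_s8 (3 : ZMod 17) (by decide : (3 : ZMod 17) ^ 16 = 1) b, hb16]
        decide
      rw [h3b17] at h17
      have h2x17 : (2 : ZMod 17) ^ x = 12 := by
        have := sub_eq_iff_eq_add.mp h17
        rw [this]; decide
      rw [pow_mod_cycle_s8 (2 : ZMod 17) (by decide : (2 : ZMod 17) ^ 8 = 1) x] at h2x17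
      have hlt : x % 8 < 8 := Nat.mod_lt _ (by norm_num)
      have key : ∀ r : Fin 8, (2 : ZMod 17) ^ (r : ℕ) ≠ 12 := by decide
      exact key ⟨_, hlt⟩ h2x17
    · push_neg at hb4
      have h3b : 3 ^ b ≤ 3 ^ 3 := Nat.pow_le_pow_right (by norm_num) (by omega)
      have hxle : x ≤ 5 := by
        by_contra hc
        push_neg at hc
        have : 2 ^ 6 ≤ 2 ^ x := Nat.pow_le_pow_right (by norm_num) (by omega)
        norm_num at this h3b
        omega
      interval_cases x <;> interval_cases b <;>
        first
        | (left; rfl)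
        | (right; rfl)
        | (norm_num at hN)
  · rintro (h | h) <;> rw [Prod.mk.injEq] at h <;> obtain ⟨rfl, rfl⟩ := h <;> norm_num
end

section
/- The only solutions in positive integers to 2^x − 3^b = 13 are (x,b) = (4,1) and (8,5). -/
set_option maxRecDepth 4000 in
lemma key_mod : ∀ i < 16, ∀ j < 256,
    ¬ ((2:ℕ)^(10+i) ≡ 3^j + 13 [MOD 263168]) := by decide

lemma pow2_per : (2:ℕ)^16 ≡ 1 [MOD 257] := by decide

lemma pow3_per : (3:ℕ)^256 ≡ 1 [MOD 263168] := by decide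

theorem eq_thirteen_case (x b : ℕ) (hx : 0 < x) (hb : 0 < b) :
    (2 : ℤ) ^ x - 3 ^ b = 13 ↔ (x, b) = (4, 1) ∨ (x, b) = (8, 5) := by
  constructor
  · intro h
    have hN : (2:ℕ)^x = 3^b + 13 := by
      have : ((2^x : ℕ) : ℤ) = ((3^b + 13 : ℕ) : ℤ) := by push_cast; linarith
      exact_mod_cast this
    by_cases hx9 : x ≤ 9
    · have hb5 : b ≤ 5 := by
        by_contra hb6
        have h1 : (3:ℕ)^6 ≤ 3^b := Nat.pow_le_pow_right (by norm_num) (by omega)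
        have h2 : (2:ℕ)^x ≤ 2^9 := Nat.pow_le_pow_right (by norm_num) hx9
        norm_num at h1 h2
        omega
      interval_cases x <;> interval_cases b <;> simp_all
    · exfalso
      push_neg at hx9
      -- x ≥ 10
      set a := x - 10 with ha
      have hxa : x = 10 + a := by omega
      have e1 : (2:ℕ)^x ≡ 2^(10 + a % 16) [MOD 263168] := by
        have h257 : (2:ℕ)^a ≡ 2^(a % 16) [MOD 257] := by
          conv_lhs => rw [← Nat.div_add_mod a 16]
          rw [pow_add, pow_mul]
          calc ((2:ℕ)^16)^(a/16) * 2^(a%16)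
              ≡ 1^(a/16) * 2^(a%16) [MOD 257] :=
                Nat.ModEq.mul_right _ (Nat.ModEq.pow _ pow2_per)
            _ = 2^(a%16) := by ring
        have := Nat.ModEq.mul_left' (c := 2^10) h257
        rw [← pow_add, ← pow_add] at this
        have h1024 : (2:ℕ)^10 * 257 = 263168 := by norm_num
        rw [h1024] at this; rwa [hxa]
      have e2 : (3:ℕ)^b ≡ 3^(b % 256) [MOD 263168] := by
        conv_lhs => rw [← Nat.div_add_mod b 256]
        rw [pow_add, pow_mul]
        calc ((3:ℕ)^256)^(b/256) * 3^(b%256)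
            ≡ 1^(b/256) * 3^(b%256) [MOD 263168] :=
              Nat.ModEq.mul_right _ (Nat.ModEq.pow _ pow3_per)
          _ = 3^(b%256) := by ring
      have e3 : (2:ℕ)^(10 + a % 16) ≡ 3^(b % 256) + 13 [MOD 263168] := by
        calc (2:ℕ)^(10 + a % 16) ≡ 2^x [MOD 263168] := e1.symm
          _ = 3^b + 13 := hN
          _ ≡ 3^(b % 256) + 13 [MOD 263168] := e2.add_right 13
      exact key_mod (a % 16) (Nat.mod_lt _ (by norm_num)) (b % 256)
        (Nat.mod_lt _ (by norm_num)) e3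
  · rintro (h | h) <;> simp_all
end

section
/- If x, a, b are positive integers with x > a and 2^a (2^{x−a} − 1) = 3^b − 1, then x − a is odd. -/
theorem s_odd (x a b : ℕ) (hx : 0 < x) (ha : 0 < a) (hb : 0 < b) (hxa : x > a)
    (h : 2 ^ a * (2 ^ (x - a) - 1) = 3 ^ b - 1) : Odd (x - a) := by
  rw [Nat.odd_iff]
  by_contra hmod
  obtain ⟨k, hk⟩ : ∃ k, x - a = 2 * k := ⟨(x - a) / 2, by omega⟩
  have h4 : (2:ℕ) ^ (x - a) = 4 ^ k := by rw [hk, pow_mul]; norm_num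
  have hd : (3:ℕ) ∣ 4 ^ k - 1 := by simpa using Nat.sub_dvd_pow_sub_pow 4 1 k
  have hd2 : (3:ℕ) ∣ 3 ^ b - 1 := by
    rw [← h, h4]; exact Dvd.dvd.mul_left hd _
  have h3 : (3:ℕ) ∣ 3 ^ b := dvd_pow_self 3 hb.ne'
  have h1 : (1:ℕ) ≤ 3 ^ b := Nat.one_le_pow _ _ (by norm_num)
  omega
end

section
/- If x, a, b are positive integers with x > a, 4 divides b, and 2^a (2^{x−a} − 1) = 3^b − 1, then a contradiction follows (there are no such solutions). -/
theorem no_sol_four_dvd (x a b : ℕ) (hx : 0 < x) (ha : 0 < a) (hb : 0 < b) (hxa : x > a)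
    (hb4 : 4 ∣ b) (h : 2 ^ a * (2 ^ (x - a) - 1) = 3 ^ b - 1) : False := by
  set d := x - a with hd
  have hdpos : 0 < d := Nat.sub_pos_of_lt hxa
  have h1 : (1 : ℕ) ≤ 2 ^ d := Nat.one_le_two_pow
  have h2 : (1 : ℕ) ≤ 3 ^ b := Nat.one_le_pow _ _ (by norm_num)
  obtain ⟨m, rfl⟩ := hb4
  -- work in ZMod 5
  have hz : (2 : ZMod 5) ^ a * (2 ^ d - 1) = 3 ^ (4 * m) - 1 := by
    have := congrArg (fun n : ℕ => (n : ZMod 5)) h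
    push_cast [Nat.cast_sub h1, Nat.cast_sub h2] at this
    exact_mod_cast this
  have hrhs : (3 : ZMod 5) ^ (4 * m) - 1 = 0 := by
    rw [pow_mul]
    have h81 : (3 : ZMod 5) ^ 4 = 1 := by decide
    rw [h81, one_pow, sub_self]
  rw [hrhs] at hz
  -- multiply by 3^a, the inverse of 2^a mod 5
  have hz2 : (2 : ZMod 5) ^ d = 1 := by
    have hinv : (3 : ZMod 5) ^ a * (2 : ZMod 5) ^ a = 1 := by
      rw [← mul_pow, show (3 : ZMod 5) * 2 = 1 from by decide, one_pow]
    have := congrArg (fun t => (3 : ZMod 5) ^ a * t) hz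
    simp only [← mul_assoc, hinv, one_mul, mul_zero] at this
    linear_combination this
  have hmod : (2 : ZMod 5) ^ (d % 4) = 1 := by
    conv at hz2 => rw [← Nat.div_add_mod d 4, pow_add, pow_mul]
    have h16 : (2 : ZMod 5) ^ 4 = 1 := by decide
    rwa [h16, one_pow, one_mul] at hz2
  have hr4 : d % 4 < 4 := Nat.mod_lt _ (by norm_num)
  have h4d : d % 4 = 0 := by
    interval_cases h : d % 4 <;> revert hmod <;> decide
  obtain ⟨n, hn⟩ : 2 ∣ d := dvd_trans (by norm_num) (Nat.dvd_of_mod_eq_zero h4d)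
  -- work in ZMod 3
  have hz3 : (2 : ZMod 3) ^ a * (2 ^ d - 1) = 3 ^ (4 * m) - 1 := by
    have := congrArg (fun k : ℕ => (k : ZMod 3)) h
    push_cast [Nat.cast_sub h1, Nat.cast_sub h2] at this
    exact_mod_cast this
  have hl : (2 : ZMod 3) ^ d - 1 = 0 := by
    rw [hn, pow_mul]
    have h4 : (2 : ZMod 3) ^ 2 = 1 := by decide
    rw [h4, one_pow, sub_self]
  rw [hl, mul_zero] at hz3
  have hr : (3 : ZMod 3) ^ (4 * m) = 0 := by
    have h3 : (3 : ZMod 3) = 0 := by decide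
    rw [h3, zero_pow]
    positivity
  rw [hr] at hz3
  have hne : (0 : ZMod 3) ≠ 0 - 1 := by decide
  exact hne hz3
end

section
/- The only solution in nonnegative integers s, z with z ≥ 1 to the equation 2^s − 1 = 2z^2 − z with s odd is s = 1, z = 1. -/
theorem quadratic_case (s z : ℕ) (hz : 1 ≤ z) (hs : Odd s)
    (h : 2 ^ s - 1 = 2 * z ^ 2 - z) : s = 1 ∧ z = 1 := by
  obtain ⟨k, hk⟩ := hs
  have hzz : z ≤ 2 * z ^ 2 := by nlinarith
  have hp : 1 ≤ 2 ^ s := Nat.one_le_two_pow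
  have h' : 2 ^ s + z = 2 * z ^ 2 + 1 := by omega
  -- move to integers
  have hZ : (2:ℤ) ^ s + z = 2 * (z:ℤ) ^ 2 + 1 := by exact_mod_cast h'
  have key : ((2:ℤ) ^ (k + 2)) ^ 2 = (4 * (z:ℤ) - 1) ^ 2 + 7 := by
    have : ((2:ℤ) ^ (k + 2)) ^ 2 = 8 * 2 ^ s := by
      rw [hk]; ring
    rw [this]; nlinarith [hZ]
  set a : ℤ := 2 ^ (k + 2) with ha
  set b : ℤ := 4 * (z:ℤ) - 1 with hb
  have hapos : (0:ℤ) ≤ a := by positivity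
  have hbpos : (3:ℤ) ≤ b := by
    have : (1:ℤ) ≤ (z:ℤ) := by exact_mod_cast hz
    simp [hb]; linarith
  have hfac : (a - b) * (a + b) = 7 := by linear_combination key
  have hab : a - b = 1 ∧ a + b = 7 := by
    have h1 : a + b ≥ 3 := by linarith
    have h2 : a - b ≥ 1 := by nlinarith [key]
    have h3 : a - b ≤ 2 := by nlinarith
    have h4 : a - b = 1 ∨ a - b = 2 := by omega
    rcases h4 with h4 | h4 <;> rw [h4] at hfac <;> omega
  have hz1 : z = 1 := by
    have : b = 3 := by omega
    have : 4 * (z:ℤ) - 1 = 3 := this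
    have : (z:ℤ) = 1 := by linarith
    exact_mod_cast this
  have ha4 : a = 4 := by omega
  have hk0 : k = 0 := by
    have hn : (2:ℕ) ^ (k + 2) = 2 ^ 2 := by
      have : (2:ℤ) ^ (k + 2) = 4 := by rw [← ha, ha4]
      exact_mod_cast this
    have h2 : k + 2 = 2 := Nat.pow_right_injective (le_refl 2) hn
    omega
  exact ⟨by omega, hz1⟩
end

section
/- If s is an odd positive integer and z is a positive integer with (4z − 1)^2 = 2^{s+3} − 7, then s = 1 and z = 1. -/
theorem square_case (s z : ℕ) (hs : 0 < s) (hsodd : Odd s) (hz : 0 < z)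
    (h : ((4 : ℤ) * z - 1) ^ 2 = 2 ^ (s + 3) - 7) : s = 1 ∧ z = 1 := by
  obtain ⟨k, hk⟩ := hsodd
  subst hk
  have hA : (2 : ℤ) ^ (2 * k + 1 + 3) = (2 ^ (k + 2)) ^ 2 := by
    rw [← pow_mul]; ring_nf
  rw [hA] at h
  set A : ℤ := 2 ^ (k + 2) with hAdef
  have hzi : (1 : ℤ) ≤ (z : ℤ) := by exact_mod_cast hz
  have hx : (3 : ℤ) ≤ 4 * z - 1 := by linarith
  have hA4 : (4 : ℤ) ≤ A := by
    calc (4:ℤ) = 2 ^ 2 := by norm_num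
    _ ≤ 2 ^ (k + 2) := pow_le_pow_right₀ (by norm_num) (by omega)
  have hfac : (A - (4 * z - 1)) * (A + (4 * z - 1)) = 7 := by nlinarith [h]
  have hb : (7 : ℤ) ≤ A + (4 * z - 1) := by linarith
  have ha : 0 < A - (4 * z - 1) := by
    by_contra hle
    push_neg at hle
    nlinarith
  have hale : A - (4 * z - 1) ≤ 1 := by nlinarith
  have h1 : A - (4 * z - 1) = 1 := by linarith
  have h2 : A + (4 * z - 1) = 7 := by
    have := hfac
    rw [h1, one_mul] at this
    exact this
  have hA4' : A = 4 := by linarith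
  have hzv : (z : ℤ) = 1 := by linarith
  have hk0 : k = 0 := by
    by_contra hk0
    have h8 : (2:ℤ) ^ 3 ≤ 2 ^ (k + 2) := pow_le_pow_right₀ (by norm_num) (by omega)
    rw [← hAdef] at h8
    omega
  refine ⟨by omega, by exact_mod_cast hzv⟩
end
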